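/- For every positive integer n there exists ε₀ > 0 such that for every ε with 0 < ε ≤ ε₀, the closed equilateral triangle of side length n + ε in the plane can be covered by n² + 2 closed unit equilateral triangles. -/

import Mathlib

set_option maxHeartbeats 1000000

noncomputable section

abbrev Pt : Type := EuclideanSpace ℝ (Fin 2)

/-- `T` is a closed equilateral triangle of side length `s`: the convex hull of
three points at pairwise distance `s > 0`. -/
def IsEquilateralTriangle (T : Set Pt) (s : ℝ) : Prop :=
  0 < s ∧ ∃ A B C : Pt, dist A B = s ∧ dist B C = s ∧ dist C A = s ∧
    T = convexHull ℝ {A, B, C}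

namespace ConwayCover

def pt (x y : ℝ) : Pt := WithLp.toLp 2 ![x, y]

@[simp] lemma pt_zero (x y : ℝ) : pt x y 0 = x := rfl
@[simp] lemma pt_one (x y : ℝ) : pt x y 1 = y := rfl

lemma pt_eta (p : Pt) : p = pt (p 0) (p 1) := by
  ext i; fin_cases i <;> rfl

lemma dist_pt (x1 y1 x2 y2 : ℝ) :
    dist (pt x1 y1) (pt x2 y2) = Real.sqrt ((x1 - x2)^2 + (y1 - y2)^2) := by
  rw [EuclideanSpace.dist_eq]
  congr 1
  rw [Fin.sum_univ_two]
  simp [pt, Real.dist_eq, sq_abs]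

local notation "s3" => Real.sqrt 3

lemma s3_pos : (0:ℝ) < s3 := by positivity
lemma s3_sq : s3 ^ 2 = 3 := Real.sq_sqrt (by norm_num)

lemma combo_mem {A B C p : Pt} {a b c : ℝ} (ha : 0 ≤ a) (hb : 0 ≤ b) (hc : 0 ≤ c)
    (hs : a + b + c = 1) (hp : p = a • A + b • B + c • C) :
    p ∈ convexHull ℝ ({A, B, C} : Set Pt) := by
  have hA : A ∈ convexHull ℝ ({A, B, C} : Set Pt) := subset_convexHull ℝ _ (by simp)
  have hB : B ∈ convexHull ℝ ({A, B, C} : Set Pt) := subset_convexHull ℝ _ (by simp)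
  have hC : C ∈ convexHull ℝ ({A, B, C} : Set Pt) := subset_convexHull ℝ _ (by simp)
  have hconv := convex_convexHull ℝ ({A, B, C} : Set Pt)
  rcases eq_or_lt_of_le (by linarith : (0:ℝ) ≤ a + b) with h0 | h0
  · have haz : a = 0 := by linarith
    have hbz : b = 0 := by linarith
    have : c = 1 := by linarith
    rw [hp, haz, hbz, this]; simpa using hC
  · set t := a + b with ht
    have hq : (t⁻¹ * a) • A + (t⁻¹ * b) • B ∈ convexHull ℝ ({A, B, C} : Set Pt) :=
      hconv hA hB (by positivity) (by positivity) (by field_simp; linarith)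
    have := hconv hq hC (le_of_lt (by positivity : (0:ℝ) < t)) hc (by linarith)
    rw [hp]
    convert this using 2
    rw [smul_add, smul_smul, smul_smul]
    rw [mul_inv_cancel_left₀ (ne_of_gt h0), mul_inv_cancel_left₀ (ne_of_gt h0)]

def upTri (a b : ℝ) : Set Pt :=
  convexHull ℝ {pt a b, pt (a+1) b, pt (a+1/2) (b + s3/2)}
def downTri (a b : ℝ) : Set Pt :=
  convexHull ℝ {pt a b, pt (a+1) b, pt (a+1/2) (b - s3/2)}

lemma mem_upTri {a b x y : ℝ} (h1 : b ≤ y) (h2 : y - b ≤ s3 * (x - a))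
    (h3 : y - b ≤ s3 * (a + 1 - x)) : pt x y ∈ upTri a b := by
  have hs3 := s3_pos
  have h2' : (y-b)/s3 ≤ x - a := by rw [div_le_iff₀ hs3]; nlinarith
  have h3' : (y-b)/s3 ≤ a + 1 - x := by rw [div_le_iff₀ hs3]; nlinarith
  have hq : 0 ≤ (y-b)/s3 := div_nonneg (by linarith) hs3.le
  refine combo_mem (a := 1 - (x - a - (y-b)/s3) - 2*((y-b)/s3))
    (b := x - a - (y-b)/s3) (c := 2*((y-b)/s3)) (by linarith) (by linarith)
    (by linarith) (by ring) ?_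
  ext i
  fin_cases i <;>
    · simp only [pt, Fin.zero_eta, Fin.mk_one, PiLp.toLp_apply, PiLp.add_apply, PiLp.smul_apply, Matrix.cons_val_zero,
        Matrix.cons_val_one, Matrix.head_cons, smul_eq_mul]
      field_simp
      ring

lemma mem_downTri {a b x y : ℝ} (h1 : y ≤ b) (h2 : b - y ≤ s3 * (x - a))
    (h3 : b - y ≤ s3 * (a + 1 - x)) : pt x y ∈ downTri a b := by
  have hs3 := s3_pos
  have h2' : (b-y)/s3 ≤ x - a := by rw [div_le_iff₀ hs3]; nlinarith
  have h3' : (b-y)/s3 ≤ a + 1 - x := by rw [div_le_iff₀ hs3]; nlinarith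
  have hq : 0 ≤ (b-y)/s3 := div_nonneg (by linarith) hs3.le
  refine combo_mem (a := 1 - (x - a - (b-y)/s3) - 2*((b-y)/s3))
    (b := x - a - (b-y)/s3) (c := 2*((b-y)/s3)) (by linarith) (by linarith)
    (by linarith) (by ring) ?_
  ext i
  fin_cases i <;>
    · simp only [pt, Fin.zero_eta, Fin.mk_one, PiLp.toLp_apply, PiLp.add_apply, PiLp.smul_apply, Matrix.cons_val_zero,
        Matrix.cons_val_one, Matrix.head_cons, smul_eq_mul]
      field_simp
      ring

lemma lin_coord (c1 c2 : ℝ) : IsLinearMap ℝ (fun p : Pt => c1 * p 0 + c2 * p 1) := by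
  constructor
  · intro p q; simp [PiLp.add_apply]; ring
  · intro c p; simp [PiLp.smul_apply]; ring

lemma hull_le {A B C : Pt} {c1 c2 r : ℝ} (hA : c1 * A 0 + c2 * A 1 ≤ r)
    (hB : c1 * B 0 + c2 * B 1 ≤ r) (hC : c1 * C 0 + c2 * C 1 ≤ r)
    {p : Pt} (hp : p ∈ convexHull ℝ ({A, B, C} : Set Pt)) :
    c1 * p 0 + c2 * p 1 ≤ r := by
  have := convexHull_min (s := ({A, B, C} : Set Pt))
    (t := {w : Pt | c1 * w 0 + c2 * w 1 ≤ r})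
    (by intro w hw
        rcases hw with h | h | h <;> subst h <;> assumption)
    (convex_halfSpace_le (lin_coord c1 c2) r)
  exact this hp

lemma dist_up1 (a b : ℝ) : dist (pt a b) (pt (a+1) b) = 1 := by
  rw [dist_pt]; norm_num
lemma dist_up2 (a b : ℝ) : dist (pt (a+1) b) (pt (a+1/2) (b + s3/2)) = 1 := by
  rw [dist_pt]
  rw [show (a + 1 - (a + 1/2))^2 + (b - (b + s3/2))^2 = 1/4 + s3^2/4 by ring, s3_sq]
  norm_num
lemma dist_up3 (a b : ℝ) : dist (pt (a+1/2) (b + s3/2)) (pt a b) = 1 := by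
  rw [dist_pt]
  rw [show (a + 1/2 - a)^2 + (b + s3/2 - b)^2 = 1/4 + s3^2/4 by ring, s3_sq]
  norm_num
lemma dist_down2 (a b : ℝ) : dist (pt (a+1) b) (pt (a+1/2) (b - s3/2)) = 1 := by
  rw [dist_pt]
  rw [show (a + 1 - (a + 1/2))^2 + (b - (b - s3/2))^2 = 1/4 + s3^2/4 by ring, s3_sq]
  norm_num
lemma dist_down3 (a b : ℝ) : dist (pt (a+1/2) (b - s3/2)) (pt a b) = 1 := by
  rw [dist_pt]
  rw [show (a + 1/2 - a)^2 + (b - s3/2 - b)^2 = 1/4 + s3^2/4 by ring, s3_sq]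
  norm_num

/-! ### The affine isometry onto a general triangle -/

def amap (A u v : Pt) : Pt →ᵃ[ℝ] Pt where
  toFun p := A + p 0 • u + p 1 • v
  linear :=
  { toFun := fun p => p 0 • u + p 1 • v
    map_add' := by intro p q; simp [PiLp.add_apply, add_smul]; abel
    map_smul' := by intro c p; simp [PiLp.smul_apply, mul_smul, smul_add] }
  map_vadd' := by
    intro p q
    simp only [vadd_eq_add, PiLp.add_apply, add_smul, LinearMap.coe_mk, AddHom.coe_mk]
    abel

lemma amap_apply (A u v p : Pt) : amap A u v p = A + p 0 • u + p 1 • v := rfl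

lemma amap_dist {u v : Pt} (hu : ‖u‖ = 1) (hv : ‖v‖ = 1)
    (huv : inner ℝ u v = (0:ℝ)) (A p q : Pt) :
    dist (amap A u v p) (amap A u v q) = dist p q := by
  have key : ∀ a b : ℝ, ‖a • u + b • v‖ = Real.sqrt (a^2 + b^2) := by
    intro a b
    have h2 : ‖a • u + b • v‖^2 = a^2 + b^2 := by
      rw [norm_add_sq_real, norm_smul, norm_smul, real_inner_smul_left,
        real_inner_smul_right, huv, hu, hv]
      simp [mul_pow, sq_abs]
    rw [← Real.sqrt_sq (norm_nonneg _), h2]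
  have : amap A u v p - amap A u v q = (p 0 - q 0) • u + (p 1 - q 1) • v := by
    simp only [amap, AffineMap.coe_mk, sub_smul]
    abel
  rw [dist_eq_norm, this, key, EuclideanSpace.dist_eq]
  congr 1
  rw [Fin.sum_univ_two]
  simp [Real.dist_eq, sq_abs]

lemma exists_frame {A B C : Pt} {s : ℝ} (hs : 0 < s) (hAB : dist A B = s)
    (hBC : dist B C = s) (hCA : dist C A = s) :
    ∃ u v : Pt, ‖u‖ = 1 ∧ ‖v‖ = 1 ∧ inner ℝ u v = (0:ℝ) ∧
      B = A + s • u ∧ C = A + (s/2) • u + (s3/2*s) • v := by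
  have hs3 := s3_pos
  set u : Pt := s⁻¹ • (B - A) with hu_def
  have hnBA : ‖B - A‖ = s := by rw [← dist_eq_norm, dist_comm]; exact hAB
  have hu : ‖u‖ = 1 := by
    rw [hu_def, norm_smul, hnBA]
    simp [abs_of_pos hs, inv_mul_cancel₀ hs.ne']
  have hBu : B = A + s • u := by
    rw [hu_def, smul_smul, mul_inv_cancel₀ hs.ne', one_smul]; abel
  have hnCA : ‖C - A‖ = s := by rw [← dist_eq_norm]; exact hCA
  have hinner : inner ℝ (C - A) u = (s/2 : ℝ) := by
    have hCB : ‖C - B‖ = s := by rw [← dist_eq_norm, dist_comm]; exact hBC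
    have hexp : C - B = (C - A) - s • u := by rw [hBu]; abel
    have h1 : ‖(C - A) - s • u‖^2 = s^2 := by rw [← hexp, hCB]
    rw [norm_sub_sq_real, real_inner_smul_right, norm_smul, hnCA,
      Real.norm_eq_abs, abs_of_pos hs, hu, mul_one] at h1
    have h2 : s * inner ℝ (C - A) u = s * (s/2) := by nlinarith
    exact mul_left_cancel₀ hs.ne' h2
  set w : Pt := (C - A) - (s/2) • u with hw_def
  have hwu : inner ℝ w u = (0:ℝ) := by
    rw [hw_def, inner_sub_left, real_inner_smul_left, hinner,
      real_inner_self_eq_norm_sq, hu]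
    ring
  have hnw : ‖w‖ = s3/2*s := by
    have h1 : ‖w‖^2 = (s3/2*s)^2 := by
      rw [hw_def, norm_sub_sq_real, real_inner_smul_right, hinner, norm_smul,
        hnCA, hu, mul_one, Real.norm_eq_abs, abs_div]
      have := s3_sq
      rw [abs_of_pos hs]
      norm_num
      nlinarith
    have hpos : (0:ℝ) ≤ s3/2*s := by positivity
    nlinarith [norm_nonneg w]
  set v : Pt := (s3/2*s)⁻¹ • w with hv_def
  have hc : (0:ℝ) < s3/2*s := by positivity
  have hv : ‖v‖ = 1 := by
    rw [hv_def, norm_smul, hnw, Real.norm_eq_abs, abs_of_pos (inv_pos.mpr hc),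
      inv_mul_cancel₀ hc.ne']
  refine ⟨u, v, hu, hv, ?_, hBu, ?_⟩
  · rw [hv_def, real_inner_smul_right, real_inner_comm w u, hwu, mul_zero]
  · rw [hv_def, smul_inv_smul₀ hc.ne', hw_def]; abel

lemma image_upTri_equi (A u v : Pt) (hu : ‖u‖ = 1) (hv : ‖v‖ = 1)
    (huv : inner ℝ u v = (0:ℝ)) (a b : ℝ) :
    IsEquilateralTriangle (amap A u v '' upTri a b) 1 := by
  refine ⟨one_pos, amap A u v (pt a b), amap A u v (pt (a+1) b),
    amap A u v (pt (a+1/2) (b + s3/2)), ?_, ?_, ?_, ?_⟩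
  · rw [amap_dist hu hv huv, dist_up1]
  · rw [amap_dist hu hv huv, dist_up2]
  · rw [amap_dist hu hv huv, dist_up3]
  · rw [upTri, AffineMap.image_convexHull]
    congr 1
    rw [Set.image_insert_eq, Set.image_insert_eq, Set.image_singleton]

lemma image_downTri_equi (A u v : Pt) (hu : ‖u‖ = 1) (hv : ‖v‖ = 1)
    (huv : inner ℝ u v = (0:ℝ)) (a b : ℝ) :
    IsEquilateralTriangle (amap A u v '' downTri a b) 1 := by
  refine ⟨one_pos, amap A u v (pt a b), amap A u v (pt (a+1) b),
    amap A u v (pt (a+1/2) (b - s3/2)), ?_, ?_, ?_, ?_⟩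
  · rw [amap_dist hu hv huv, dist_up1]
  · rw [amap_dist hu hv huv, dist_down2]
  · rw [amap_dist hu hv huv, dist_down3]
  · rw [downTri, AffineMap.image_convexHull]
    congr 1
    rw [Set.image_insert_eq, Set.image_insert_eq, Set.image_singleton]

/-! ### The standard cover -/

def AA (n : ℕ) (ε : ℝ) (j : ℕ) : ℝ := j + ε * 2^n / 2^j
def YY (n : ℕ) (ε : ℝ) (j : ℕ) : ℝ := s3/2 * (((n:ℝ)+ε) - AA n ε (j+1))
def xL (n : ℕ) (ε : ℝ) (j : ℕ) : ℝ := (((n:ℝ)+ε) - AA n ε (j+1))/2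
def gg (n : ℕ) (ε : ℝ) (j : ℕ) : ℝ := (AA n ε (j+1) - 1)/(j:ℝ)

def tri (n : ℕ) (ε : ℝ) (i : ℕ) : Set Pt :=
  if i = 0 then
    upTri ((((n:ℝ)+ε)-1-ε*2^n/2)/2) (s3/2*((((n:ℝ)+ε))-1-ε*2^n/2))
  else if i = 1 then
    upTri ((((n:ℝ)+ε)-1-ε*2^n/2)/2 + ε*2^n/2) (s3/2*((((n:ℝ)+ε))-1-ε*2^n/2))
  else if i = 2 then
    upTri ((((n:ℝ)+ε)-1)/2) (s3/2*(((n:ℝ)+ε)-1))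
  else
    let m := i - 2
    let j := Nat.sqrt m
    let r := m - j*j
    if r % 2 = 0 then upTri (xL n ε j + (r:ℝ)/2 * gg n ε j) (YY n ε j)
    else downTri (xL n ε j + (r:ℝ)/2 * gg n ε j) (YY n ε (j-1))

lemma tri_shape (n : ℕ) (ε : ℝ) (i : ℕ) :
    (∃ a b, tri n ε i = upTri a b) ∨ (∃ a b, tri n ε i = downTri a b) := by
  rw [tri]
  dsimp only
  split_ifs
  all_goals first
    | exact Or.inl ⟨_, _, rfl⟩
    | exact Or.inr ⟨_, _, rfl⟩

lemma tri_eval (n : ℕ) (ε : ℝ) {j r : ℕ} (hj : 1 ≤ j) (hr : r ≤ 2*j) :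
    tri n ε (2 + (j*j + r)) = if r % 2 = 0
      then upTri (xL n ε j + (r:ℝ)/2 * gg n ε j) (YY n ε j)
      else downTri (xL n ε j + (r:ℝ)/2 * gg n ε j) (YY n ε (j-1)) := by
  have hsq : Nat.sqrt (j*j + r) = j := by
    have h2 : j ≤ Nat.sqrt (j*j+r) := Nat.le_sqrt.mpr (by omega)
    have h3 : Nat.sqrt (j*j+r) < j+1 := by
      apply Nat.sqrt_lt.mpr
      have : (j+1)*(j+1) = j*j + 2*j + 1 := by ring
      omega
    omega
  have hjj : 1 ≤ j*j := Nat.mul_le_mul hj hj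
  have h0 : ¬ (2 + (j*j+r) = 0) := by omega
  have h1 : ¬ (2 + (j*j+r) = 1) := by omega
  have h2' : ¬ (2 + (j*j+r) = 2) := by omega
  rw [tri, if_neg h0, if_neg h1, if_neg h2']
  have hm : 2 + (j*j+r) - 2 = j*j + r := by omega
  simp only [hm, hsq]
  have : j*j + r - j*j = r := by omega
  simp only [this]

lemma exists_between' (A : ℕ → ℝ) (z : ℝ) : ∀ m : ℕ, 0 < m → A 0 ≤ z → z ≤ A m →
    ∃ j, j < m ∧ A j ≤ z ∧ z ≤ A (j+1) := by
  intro m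
  induction m with
  | zero => omega
  | succ m ih =>
    intro _ h0 hm
    by_cases hz : z ≤ A m
    · rcases Nat.eq_zero_or_pos m with rfl | hm'
      · exact ⟨0, by omega, h0, hm⟩
      · obtain ⟨j, h1, h2, h3⟩ := ih hm' h0 hz
        exact ⟨j, by omega, h2, h3⟩
    · exact ⟨m, by omega, le_of_not_ge hz, hm⟩

lemma exists_between_dec (A : ℕ → ℝ) (z : ℝ) (m : ℕ) (hm : 0 < m) (h1 : A m ≤ z)
    (h2 : z ≤ A 0) : ∃ j, j < m ∧ A (j+1) ≤ z ∧ z ≤ A j := by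
  obtain ⟨j, hj, hj1, hj2⟩ := exists_between' (fun k => -A k) (-z) m hm
    (by simpa using h2) (by simpa using h1)
  exact ⟨j, hj, by linarith [hj2], by linarith [hj1]⟩

lemma std_cover (n : ℕ) (hn : 0 < n) {ε : ℝ} (hε : 0 < ε) (hE1 : ε * 2^n ≤ 1) :
    convexHull ℝ ({pt 0 0, pt ((n:ℝ)+ε) 0,
        pt (((n:ℝ)+ε)/2) (s3/2*((n:ℝ)+ε))} : Set Pt) ⊆
      ⋃ i : Fin (n^2+2), tri n ε (i : ℕ) := by
  have hs3 := s3_pos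
  set s : ℝ := (n:ℝ) + ε with hs_def
  have hs : (0:ℝ) < s := by positivity
  clear_value s
  have hn1 : (1:ℝ) ≤ (n:ℝ) := by exact_mod_cast hn
  have hnsq1 : 1 ≤ n^2 := Nat.one_le_pow 2 n hn
  intro p hp
  set x := p 0 with hx_def
  set y := p 1 with hy_def
  have hpxy : p = pt x y := pt_eta p
  clear_value x y
  -- the three half-plane inequalities
  have hss : (0:ℝ) ≤ s3 * s := mul_nonneg hs3.le hs.le
  have hy0 : 0 ≤ y := by
    have h := hull_le (c1 := 0) (c2 := -1) (r := 0)
      (by simp only [pt_zero, pt_one]; nlinarith [hss])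
      (by simp only [pt_zero, pt_one]; nlinarith [hss])
      (by simp only [pt_zero, pt_one]; nlinarith [hss]) hp
    rw [← hx_def, ← hy_def] at h
    linarith
  have hL : y ≤ s3 * x := by
    have h := hull_le (c1 := -s3) (c2 := 1) (r := 0)
      (by simp only [pt_zero, pt_one]; nlinarith [hss])
      (by simp only [pt_zero, pt_one]; nlinarith [hss])
      (by simp only [pt_zero, pt_one]; nlinarith [hss]) hp
    rw [← hx_def, ← hy_def] at h
    linarith
  have hR : y ≤ s3 * s - s3 * x := by
    have h := hull_le (c1 := s3) (c2 := 1) (r := s3 * s)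
      (by simp only [pt_zero, pt_one]; nlinarith [hss])
      (by simp only [pt_zero, pt_one]; nlinarith [hss])
      (by simp only [pt_zero, pt_one]; nlinarith [hss]) hp
    rw [← hx_def, ← hy_def] at h
    linarith
  -- basic quantities
  have hE : 0 < ε * 2^n := by positivity
  set Y0 : ℝ := s3/2*(s-1-ε*2^n/2) with hY0_def
  clear_value Y0
  by_cases hcase : Y0 ≤ y
  · -- top part : one of the three corner triangles
    by_cases hc1 : y - Y0 ≤ s3 * ((s-1-ε*2^n/2)/2 + 1 - x)
    · refine Set.mem_iUnion.mpr ⟨⟨0, by omega⟩, ?_⟩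
      have htri : tri n ε 0 = upTri ((s-1-ε*2^n/2)/2) Y0 := by
        rw [tri, if_pos rfl, hY0_def, hs_def]
      rw [htri, hpxy]
      have e : s3 * (x - (s-1-ε*2^n/2)/2) = s3*x - Y0 := by rw [hY0_def]; ring
      exact mem_upTri hcase (by linarith [hL, e]) hc1
    · by_cases hc2 : y - Y0 ≤ s3 * (x - ((s-1-ε*2^n/2)/2 + ε*2^n/2))
      · refine Set.mem_iUnion.mpr ⟨⟨1, by omega⟩, ?_⟩
        have htri : tri n ε 1 = upTri ((s-1-ε*2^n/2)/2 + ε*2^n/2) Y0 := by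
          rw [tri, if_neg (by omega), if_pos rfl, hY0_def, hs_def]
        rw [htri, hpxy]
        have e : s3 * ((s-1-ε*2^n/2)/2 + ε*2^n/2 + 1 - x) = s3*s - s3*x - Y0 := by
          rw [hY0_def]; ring
        exact mem_upTri hcase hc2 (by linarith [hR, e])
      · refine Set.mem_iUnion.mpr ⟨⟨2, by omega⟩, ?_⟩
        have htri : tri n ε 2 = upTri ((s-1)/2) (s3/2*(s-1)) := by
          rw [tri, if_neg (by omega), if_neg (by omega), if_pos rfl, hs_def]
        rw [htri, hpxy]
        push_neg at hc1 hc2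
        have hfac : 0 ≤ s3 * (1 - ε * 2^n) :=
          mul_nonneg hs3.le (by linarith)
        have esum : s3 * ((s-1-ε*2^n/2)/2 + 1 - x) +
            s3 * (x - ((s-1-ε*2^n/2)/2 + ε*2^n/2)) = s3 - s3*(ε*2^n)/2 := by ring
        have eY : s3/2*(s-1) = Y0 + s3*(ε*2^n)/4 := by rw [hY0_def]; ring
        have e2 : s3 * (x - (s-1)/2) = s3*x - s3/2*(s-1) := by ring
        have e3 : s3 * ((s-1)/2 + 1 - x) = s3*s - s3*x - s3/2*(s-1) := by ring
        refine mem_upTri (by linarith [hc1, hc2, esum, eY, hfac])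
          (by linarith [hL, e2]) (by linarith [hR, e3])
  · -- strip part
    push_neg at hcase
    rcases Nat.lt_or_ge n 2 with hn2 | hn2
    · exfalso
      have hn1' : n = 1 := by omega
      have hY00 : Y0 = 0 := by
        rw [hY0_def, hs_def, hn1']
        push_cast
        ring_nf
      linarith
    -- find the strip j
    have hstep : n - 1 + 1 = n := by omega
    have hAAn : AA n ε n = s := by
      rw [AA, hs_def]
      field_simp
    have hbot : YY n ε (n-1) ≤ y := by
      rw [YY, hstep, hAAn, ← hs_def]
      simpa using hy0
    have htop : y ≤ YY n ε 0 := by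
      rw [YY]
      have h1 : AA n ε 1 = 1 + ε * 2^n/2 := by rw [AA]; norm_num
      rw [h1, ← hs_def]
      have h2 : s3/2 * (s - (1 + ε*2^n/2)) = Y0 := by rw [hY0_def]; ring
      rw [h2]
      exact hcase.le
    obtain ⟨j', hj'lt, hyb, hyt⟩ := exists_between_dec (YY n ε) y (n-1)
      (by omega) hbot htop
    set j : ℕ := j' + 1 with hj_def
    clear_value j
    have hj1 : 1 ≤ j := by omega
    have hjn : j ≤ n - 1 := by omega
    have hjR : (1:ℝ) ≤ (j:ℝ) := by exact_mod_cast hj1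
    have hjRpos : (0:ℝ) < (j:ℝ) := by linarith
    -- abbreviations
    set c : ℝ := ε * 2^n / 2^(j+1) with hc_def
    have hc0 : 0 < c := by positivity
    clear_value c
    have hcle : c ≤ 1 := by
      rw [hc_def, div_le_one (by positivity)]
      have h2 : (1:ℝ) ≤ 2^(j+1) := one_le_pow₀ (by norm_num)
      linarith
    have hAAj1 : AA n ε (j+1) = (j:ℝ) + 1 + c := by
      rw [AA, hc_def]; push_cast; ring
    have hAAj : AA n ε j = (j:ℝ) + 2*c := by
      rw [AA, hc_def, pow_succ]
      field_simp
    have hgval : gg n ε j = ((j:ℝ) + c)/(j:ℝ) := by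
      rw [gg, hAAj1]; ring_nf
    have hgpos : 0 < gg n ε j := by
      rw [hgval]; positivity
    have hgkey : gg n ε j ≤ 1 + c := by
      rw [hgval, div_le_iff₀ hjRpos]
      nlinarith [mul_nonneg (by linarith : (0:ℝ) ≤ (j:ℝ)-1) hc0.le]
    -- the strip top identity
    have htopeq : YY n ε j' = YY n ε j + s3/2 * (1 - c) := by
      rw [YY, YY, ← hj_def, hAAj1, hAAj]
      ring
    have hyt2 : y ≤ YY n ε j + s3/2 * (1 - c) := by rw [← htopeq]; exact hyt
    -- local coordinates
    set Y : ℝ := YY n ε j with hY_def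
    set ξ : ℝ := x - xL n ε j with hξ_def
    clear_value Y ξ
    have hxLY : s3 * xL n ε j = Y := by rw [hY_def, YY, xL]; ring
    have hjg : (j:ℝ) * gg n ε j = AA n ε (j+1) - 1 := by
      rw [gg]
      field_simp
    set q : ℝ := (y - Y)/s3 with hq_def
    clear_value q
    have hq : q * s3 = y - Y := by rw [hq_def]; field_simp
    have hq0 : 0 ≤ q := by
      rw [hq_def]
      exact div_nonneg (by rw [hY_def]; linarith) hs3.le
    have hξq : q ≤ ξ := by
      have h1 : s3 * ξ = s3 * x - Y := by
        rw [hξ_def, mul_sub, hxLY]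
      have h2 : s3 * q ≤ s3 * ξ := by rw [h1]; linarith [hq, hL]
      exact le_of_mul_le_mul_left h2 hs3
    have hright : ξ ≤ AA n ε (j+1) - q := by
      have h1 : s3 * (AA n ε (j+1) - ξ) = (s3 * s - s3 * x) - Y := by
        rw [hξ_def, hY_def, YY, xL, hs_def]
        ring
      have h2 : s3 * q ≤ s3 * (AA n ε (j+1) - ξ) := by
        rw [h1]; linarith [hq, hR]
      have := le_of_mul_le_mul_left h2 hs3
      linarith
    -- choose the column
    set k0 : ℕ := ⌊(ξ - q)/gg n ε j⌋₊ with hk0_def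
    set k : ℕ := min j k0 with hk_def
    clear_value k0 k
    have hkj : k ≤ j := by omega
    have hk : (k:ℝ) * gg n ε j ≤ ξ - q := by
      have h1 : (k:ℝ) ≤ (k0:ℝ) := by
        have : k ≤ k0 := by omega
        exact_mod_cast this
      have h2 : (k0:ℝ) ≤ (ξ - q)/gg n ε j := by
        rw [hk0_def]
        exact Nat.floor_le (div_nonneg (by linarith) hgpos.le)
      have h3 : (k:ℝ) ≤ (ξ - q)/gg n ε j := le_trans h1 h2
      exact (le_div_iff₀ hgpos).mp h3
    have hjnn : j + 1 ≤ n := by omega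
    have hsq_le : (j+1)*(j+1) ≤ n*n := Nat.mul_le_mul hjnn hjnn
    by_cases hcu : ξ ≤ (k:ℝ)*gg n ε j + 1 - q
    · -- up triangle (j, k)
      have hidx : 2 + (j*j + 2*k) < n^2 + 2 := by nlinarith [hsq_le, hkj]
      refine Set.mem_iUnion.mpr ⟨⟨2 + (j*j + 2*k), hidx⟩, ?_⟩
      have heval := tri_eval n ε hj1 (show 2*k ≤ 2*j by omega)
      rw [if_pos (by omega)] at heval
      have hcast : ((2*k : ℕ):ℝ)/2 = (k:ℝ) := by push_cast; ring
      rw [heval, hcast, hpxy]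
      rw [← hY_def]
      refine mem_upTri hyb ?_ ?_
      · have h1 : s3 * (x - (xL n ε j + (k:ℝ) * gg n ε j)) =
            s3 * ξ - s3 * ((k:ℝ) * gg n ε j) := by
          rw [hξ_def]; ring
        have h2 := mul_le_mul_of_nonneg_left hk hs3.le
        linarith [hq, h1, h2]
      · have h1 : s3 * (xL n ε j + (k:ℝ) * gg n ε j + 1 - x) =
            s3 * ((k:ℝ) * gg n ε j + 1) - s3 * ξ := by
          rw [hξ_def]; ring
        have h2 := mul_le_mul_of_nonneg_left hcu hs3.le
        linarith [hq, h1, h2]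
    · -- down triangle (j, k+1)
      push_neg at hcu
      have hklt : k < j := by
        rcases lt_or_eq_of_le hkj with h | h
        · exact h
        · exfalso
          rw [h] at hcu
          linarith [hjg, hright, hcu]
      have hkk0 : k = k0 := by omega
      have hflo : ξ - q < ((k:ℝ)+1) * gg n ε j := by
        have h1 : (ξ - q)/gg n ε j < (k0:ℝ) + 1 := by
          rw [hk0_def]
          exact Nat.lt_floor_add_one _
        have h2 : (ξ - q)/gg n ε j < (k:ℝ) + 1 := by rw [hkk0]; exact h1
        exact (div_lt_iff₀ hgpos).mp h2
      have hidx : 2 + (j*j + (2*k+1)) < n^2 + 2 := by nlinarith [hsq_le, hklt]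
      refine Set.mem_iUnion.mpr ⟨⟨2 + (j*j + (2*k+1)), hidx⟩, ?_⟩
      have heval := tri_eval n ε hj1 (show 2*k+1 ≤ 2*j by omega)
      rw [if_neg (by omega)] at heval
      have hcast : ((2*k+1 : ℕ):ℝ)/2 = (k:ℝ) + 1/2 := by push_cast; ring
      have hjm1 : j - 1 = j' := by omega
      rw [heval, hcast, hjm1, hpxy]
      have hkey : s3/2 * (gg n ε j + (1 - c)) ≤ s3 := by
        have h1 : gg n ε j + (1-c) ≤ 2 := by linarith [hgkey]
        have h2 := mul_le_mul_of_nonneg_left h1 (by positivity : (0:ℝ) ≤ s3/2)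
        linarith
      rw [htopeq]
      refine mem_downTri (by rw [← htopeq]; exact hyt) ?_ ?_
      · have h1 : s3 * (x - (xL n ε j + ((k:ℝ)+1/2) * gg n ε j)) =
            s3 * ξ - s3*((k:ℝ) * gg n ε j) - s3 * gg n ε j/2 := by
          rw [hξ_def]; ring
        have h2 := mul_le_mul_of_nonneg_left hcu.le hs3.le
        have h3 : s3/2*(1-c) ≤ s3 - s3 * gg n ε j /2 := by linarith [hkey]
        linarith [hq, h1, h2, h3]
      · have h1 : s3 * ((xL n ε j + ((k:ℝ)+1/2) * gg n ε j) + 1 - x) =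
            s3*((k:ℝ) * gg n ε j) + s3 * gg n ε j/2 + s3 - s3 * ξ := by
          rw [hξ_def]; ring
        have h2 := mul_le_mul_of_nonneg_left hflo.le hs3.le
        have h3 : s3/2*(1-c) ≤ s3 - s3 * gg n ε j /2 := by linarith [hkey]
        linarith [hq, h1, h2, h3]

end ConwayCover

open ConwayCover in
/-- For every positive integer n there exists ε₀ > 0 such that for every ε with
0 < ε ≤ ε₀, any closed equilateral triangle of side length n + ε can be covered by
n² + 2 closed unit equilateral triangles. -/
theorem statement0 (n : ℕ) (hn : 0 < n) :
    ∃ ε₀ : ℝ, 0 < ε₀ ∧ ∀ ε : ℝ, 0 < ε → ε ≤ ε₀ →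
      ∀ T : Set Pt, IsEquilateralTriangle T ((n : ℝ) + ε) →
        ∃ S : Fin (n ^ 2 + 2) → Set Pt,
          (∀ i, IsEquilateralTriangle (S i) 1) ∧ T ⊆ ⋃ i, S i := by
  refine ⟨1/2^n, by positivity, ?_⟩
  intro ε hε hεle T hT
  obtain ⟨hspos, A, B, C, hAB, hBC, hCA, hTeq⟩ := hT
  have hE1 : ε * 2^n ≤ 1 := by
    have h2n : (0:ℝ) < 2^n := by positivity
    calc ε * 2^n ≤ (1/2^n) * 2^n := by nlinarith
      _ = 1 := by field_simp
  obtain ⟨u, v, hu, hv, huv, hBu, hCu⟩ := exists_frame hspos hAB hBC hCA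
  set s : ℝ := (n:ℝ) + ε with hs_def
  have hf0 : amap A u v (pt 0 0) = A := by
    rw [amap_apply]; simp
  have hf1 : amap A u v (pt s 0) = B := by
    rw [amap_apply]; simp [hBu]
  have hf2 : amap A u v (pt (s/2) (Real.sqrt 3/2*s)) = C := by
    rw [amap_apply]; simp [hCu]
  refine ⟨fun i => amap A u v '' tri n ε (i : ℕ), ?_, ?_⟩
  · intro i
    show IsEquilateralTriangle (amap A u v '' tri n ε (i : ℕ)) 1
    rcases tri_shape n ε (i : ℕ) with ⟨a, b, hab⟩ | ⟨a, b, hab⟩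
    · rw [hab]; exact image_upTri_equi A u v hu hv huv a b
    · rw [hab]; exact image_downTri_equi A u v hu hv huv a b
  · rw [hTeq]
    have himg : ({A, B, C} : Set Pt) =
        amap A u v '' {pt 0 0, pt s 0, pt (s/2) (Real.sqrt 3/2*s)} := by
      rw [Set.image_insert_eq, Set.image_insert_eq, Set.image_singleton,
        hf0, hf1, hf2]
    rw [himg, ← AffineMap.image_convexHull]
    intro z hz
    obtain ⟨p, hp, rfl⟩ := hz
    have hcov := std_cover n hn hε hE1 hp
    obtain ⟨U, ⟨i, rfl⟩, hpU⟩ := hcov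
    exact Set.mem_iUnion.mpr ⟨i, ⟨p, hpU, rfl⟩⟩
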